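/- arXiv:2605.15002 — 8 statements merged into one kernel-verified Lean document; each statement's English description precedes it below -/
import Mathlib

section
/- For any two non-tautological linear clauses C and D over n Boolean variables, C and D are satisfied by exactly the same assignments if and only if their linear negations are equal as subspaces: ⟨C⟩ = ⟨D⟩. -/
namespace XorSAT

/-- An affine equation over `n` Boolean variables: the coefficients of the `n`
variables together with a right-hand side, i.e. a vector in `F₂^(n+1)`. -/
abbrev Eqn (n : ℕ) : Type := (Fin n → ZMod 2) × ZMod 2

/-- The equation `𝟏`, i.e. `0 = 1`, satisfied by no assignment. -/
def oneEq (n : ℕ) : Eqn n := (0, 1)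

/-- An assignment `x` satisfies the equation `(a, b)` iff `∑ aᵢ xᵢ = b`. -/
def Sats {n : ℕ} (x : Fin n → ZMod 2) (e : Eqn n) : Prop :=
  (∑ i, e.1 i * x i) = e.2

/-- A linear clause: a (finite) disjunction of affine equations. -/
abbrev Clause (n : ℕ) : Type := Finset (Eqn n)

/-- An assignment satisfies a linear clause iff it satisfies some equation in it. -/
def SatsClause {n : ℕ} (x : Fin n → ZMod 2) (C : Clause n) : Prop :=
  ∃ e ∈ C, Sats x e

/-- A clause is non-tautological if some assignment falsifies every equation of it. -/
def NonTaut {n : ℕ} (C : Clause n) : Prop :=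
  ∃ x : Fin n → ZMod 2, ∀ e ∈ C, ¬ Sats x e

/-- The linear negation `⟨C⟩` of a clause `C = f₁ ∨ … ∨ f_m`:
the `F₂`-span of `f₁ + 𝟏, …, f_m + 𝟏`. -/
def linneg {n : ℕ} (C : Clause n) : Submodule (ZMod 2) (Eqn n) :=
  Submodule.span (ZMod 2) ((fun e => e + oneEq n) '' (C : Set (Eqn n)))

/-- A set of equations is consistent if some assignment satisfies all of them. -/
def Consistent {n : ℕ} (U : Set (Eqn n)) : Prop :=
  ∃ x : Fin n → ZMod 2, ∀ e ∈ U, Sats x e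

/-- The `F₂`-linear span of a set of equations, as a submodule. -/
def spn {n : ℕ} (U : Set (Eqn n)) : Submodule (ZMod 2) (Eqn n) :=
  Submodule.span (ZMod 2) U

end XorSAT

/-!
An assignment `x` falsifies `C` exactly when the evaluation functional `(a, b) ↦ a·x + b`
annihilates `⟨C⟩`, and over `F₂` the evaluation functionals are exactly the functionals taking
the value `1` at `𝟏`. Hence `C` and `D` have the same models iff `⟨C⟩` and `⟨D⟩` have the same
annihilating functionals normalised at `𝟏`. Non-tautology says `𝟏 ∉ ⟨C⟩`, and a subspace avoiding
a vector `u` is cut out by its annihilating functionals normalised at `u`.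
-/

theorem Subspace.forall_apply_eq_one_mem_dualAnnihilator_apply_eq_zero_iff {K V : Type*}
    [Field K] [AddCommGroup V] [Module K V] {W : Subspace K V} {u : V} (hu : u ∉ W) (v : V) :
    (∀ φ : Module.Dual K V, φ u = 1 → φ ∈ W.dualAnnihilator → φ v = 0) ↔ v ∈ W := by
  rw [← Subspace.forall_mem_dualAnnihilator_apply_eq_zero_iff]
  refine ⟨fun h φ hφ => ?_, fun h φ _ hφ => h φ hφ⟩
  obtain ⟨ψ, hψ, hψu⟩ : ∃ ψ ∈ W.dualAnnihilator, ψ u ≠ 0 := by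
    by_contra! h₀
    exact hu ((Subspace.forall_mem_dualAnnihilator_apply_eq_zero_iff W u).mp h₀)
  set ψ₁ := (ψ u)⁻¹ • ψ
  have hψ₁ : ψ₁ ∈ W.dualAnnihilator := W.dualAnnihilator.smul_mem _ hψ
  have hψ₁u : ψ₁ u = 1 := inv_mul_cancel₀ hψu
  -- correcting `φ` by multiples of `ψ₁` normalises its value at `u` without changing it at `v`
  have := h (ψ₁ + φ - φ u • ψ₁) (by simp [hψ₁u])
    (sub_mem (add_mem hψ₁ hφ) (Submodule.smul_mem _ _ hψ₁))
  simpa [h ψ₁ hψ₁u hψ₁] using this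

theorem Subspace.eq_of_forall_apply_eq_one_mem_dualAnnihilator_iff {K V : Type*} [Field K]
    [AddCommGroup V] [Module K V] {W₁ W₂ : Subspace K V} {u : V} (hu₁ : u ∉ W₁) (hu₂ : u ∉ W₂)
    (h : ∀ φ : Module.Dual K V, φ u = 1 →
      (φ ∈ W₁.dualAnnihilator ↔ φ ∈ W₂.dualAnnihilator)) :
    W₁ = W₂ := by
  ext v
  rw [← Subspace.forall_apply_eq_one_mem_dualAnnihilator_apply_eq_zero_iff hu₁,
    ← Subspace.forall_apply_eq_one_mem_dualAnnihilator_apply_eq_zero_iff hu₂]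
  exact forall_congr' fun φ => forall_congr' fun hφ => imp_congr_left (h φ hφ)

namespace XorSAT

def evalEqn {n : ℕ} (x : Fin n → ZMod 2) : Module.Dual (ZMod 2) (Eqn n) :=
  (Fintype.linearCombination (ZMod 2) x).coprod LinearMap.id

theorem evalEqn_apply {n : ℕ} (x : Fin n → ZMod 2) (e : Eqn n) :
    evalEqn x e = (∑ i, e.1 i * x i) + e.2 := by
  simp [evalEqn, Fintype.linearCombination_apply]

theorem evalEqn_oneEq {n : ℕ} (x : Fin n → ZMod 2) : evalEqn x (oneEq n) = 1 := by
  simp [evalEqn_apply, oneEq]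

theorem exists_evalEqn_eq {n : ℕ} (f : Module.Dual (ZMod 2) (Eqn n)) (hf : f (oneEq n) = 1) :
    ∃ x, evalEqn x = f := by
  refine ⟨fun i => f (Pi.single i 1, 0), ?_⟩
  ext i
  · simp [evalEqn_apply, Pi.single_apply]
  · simpa [evalEqn_apply, oneEq] using hf.symm

theorem not_sats_iff {n : ℕ} (x : Fin n → ZMod 2) (e : Eqn n) :
    ¬ Sats x e ↔ evalEqn x (e + oneEq n) = 0 := by
  have key : ∀ a b : ZMod 2, a ≠ b ↔ a + b + 1 = 0 := by decide
  rw [map_add, evalEqn_oneEq, evalEqn_apply, Sats, ← ne_eq, key, add_assoc]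

theorem forall_not_sats_iff_mem_dualAnnihilator {n : ℕ} (x : Fin n → ZMod 2) (C : Clause n) :
    (∀ e ∈ C, ¬ Sats x e) ↔ evalEqn x ∈ (linneg C).dualAnnihilator := by
  rw [linneg, ← SetLike.mem_coe, Submodule.coe_dualAnnihilator_span, Set.mem_ofPred_eq,
    Set.image_subset_iff]
  exact forall₂_congr fun e _ => not_sats_iff x e

theorem satsClause_iff_notMem_dualAnnihilator {n : ℕ} (x : Fin n → ZMod 2) (C : Clause n) :
    SatsClause x C ↔ evalEqn x ∉ (linneg C).dualAnnihilator := by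
  rw [← forall_not_sats_iff_mem_dualAnnihilator, SatsClause]
  push Not
  rfl

theorem oneEq_notMem_linneg {n : ℕ} {C : Clause n} (hC : NonTaut C) : oneEq n ∉ linneg C := by
  obtain ⟨x, hx⟩ := hC
  intro h
  have h₀ := (Submodule.mem_dualAnnihilator _).mp
    ((forall_not_sats_iff_mem_dualAnnihilator x C).mp hx) _ h
  rw [evalEqn_oneEq] at h₀
  exact one_ne_zero h₀

/-- Two non-tautological linear clauses over `n` Boolean variables
are satisfied by exactly the same assignments iff their linear negations are equal
as subspaces. -/
theorem stmt0 {n : ℕ} (C D : Clause n) (hC : NonTaut C) (hD : NonTaut D) :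
    (∀ x : Fin n → ZMod 2, SatsClause x C ↔ SatsClause x D) ↔ linneg C = linneg D := by
  refine ⟨fun h => ?_, fun h x => ?_⟩
  · refine Subspace.eq_of_forall_apply_eq_one_mem_dualAnnihilator_iff
      (oneEq_notMem_linneg hC) (oneEq_notMem_linneg hD) fun f hf => ?_
    obtain ⟨x, rfl⟩ := exists_evalEqn_eq f hf
    simpa only [satsClause_iff_notMem_dualAnnihilator, not_iff_not] using h x
  · rw [satsClause_iff_notMem_dualAnnihilator, satsClause_iff_notMem_dualAnnihilator, h]

end XorSAT
end

section
/- Every refutation of an XNF formula Δ in the proof system whose rules are addition and change of basis can be converted into a Res(⊕) refutation of Δ (using resolution and weakening) in which each addition step is replaced by one weakening followed by one resolution, and each change-of-basis step is a weakening; in particular the resulting Res(⊕) refutation has at most twice as many inference steps. -/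
namespace XorSAT

/-- Justification of a proof line: axiom, resolution, weakening, addition,
or change of basis (with premiss indices and, where needed, pivot equations). -/
inductive Just (n : ℕ) where
  | ax : Just n
  | res (i j : ℕ) (f : Eqn n) : Just n
  | weak (i : ℕ) : Just n
  | add (i j : ℕ) (f g : Eqn n) : Just n
  | cob (i : ℕ) : Just n

def Just.isAx {n : ℕ} : Just n → Bool
  | .ax => true
  | _ => false

def Just.isRes {n : ℕ} : Just n → Bool
  | .res _ _ _ => true
  | _ => false

def Just.isWeak {n : ℕ} : Just n → Bool
  | .weak _ => true
  | _ => false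

def Just.isAdd {n : ℕ} : Just n → Bool
  | .add _ _ _ _ => true
  | _ => false

def Just.isCob {n : ℕ} : Just n → Bool
  | .cob _ => true
  | _ => false

/-- Validity of line `k` of a `Res(⊕)`-style proof from `Δ` with lines `L`:
* axiom: `L k ∈ Δ`;
* resolution: from `C ∨ f` and `D ∨ (f+𝟏)` derive `C ∨ D`;
* weakening: from `C` derive any `D` with `⟨C⟩ ⊆ ⟨D⟩`;
* addition: from `C ∨ f` and `D ∨ g` derive `C ∨ D ∨ (f+g)`;
* change of basis: from `C` derive any `D` with `⟨C⟩ = ⟨D⟩`. -/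
def StepOK {n : ℕ} (Δ : Set (Clause n)) (L : ℕ → Clause n) (k : ℕ) : Just n → Prop
  | .ax => L k ∈ Δ
  | .res i j f => i < k ∧ j < k ∧ f ∈ L i ∧ f + oneEq n ∈ L j ∧
      L k = ((L i).erase f) ∪ ((L j).erase (f + oneEq n))
  | .weak i => i < k ∧ linneg (L i) ≤ linneg (L k)
  | .add i j f g => i < k ∧ j < k ∧ f ∈ L i ∧ g ∈ L j ∧
      L k = insert (f + g) (((L i).erase f) ∪ ((L j).erase g))
  | .cob i => i < k ∧ linneg (L i) = linneg (L k)

/-- A valid proof from `Δ` with `N` lines: each line is a non-tautological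
linear clause and is correctly justified. -/
def ValidProof {n : ℕ} (Δ : Set (Clause n)) (N : ℕ)
    (L : ℕ → Clause n) (J : ℕ → Just n) : Prop :=
  ∀ k < N, NonTaut (L k) ∧ StepOK Δ L k (J k)

/-- A refutation of `Δ`: a valid proof deriving the unit clause `𝟏`. -/
def Refutes {n : ℕ} (Δ : Set (Clause n)) (N : ℕ)
    (L : ℕ → Clause n) (J : ℕ → Just n) : Prop :=
  ValidProof Δ N L J ∧ ∃ k < N, L k = ({oneEq n} : Clause n)

/-- The number of lines among the first `N` whose justification satisfies `p`. -/
def countJ {n : ℕ} (N : ℕ) (J : ℕ → Just n) (p : Just n → Bool) : ℕ :=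
  ((Finset.range N).filter (fun k => p (J k))).card

open scoped Classical

section Aux

variable {n : ℕ}

lemma eqn_add_self (v : Eqn n) : v + v = 0 := by
  have h2 : ∀ a : ZMod 2, a + a = 0 := by decide
  exact Prod.ext_iff.mpr ⟨funext fun i => h2 _, h2 _⟩

lemma add_one_one (v : Eqn n) : v + oneEq n + oneEq n = v := by
  rw [add_assoc, eqn_add_self, add_zero]

lemma sats_add_one (x : Fin n → ZMod 2) (e : Eqn n) :
    Sats x (e + oneEq n) ↔ ¬ Sats x e := by
  have key : ∀ a b : ZMod 2, (a = b + 1) ↔ ¬ (a = b) := by decide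
  show (∑ i, (e.1 i + (0 : Fin n → ZMod 2) i) * x i) = e.2 + 1 ↔ _
  simp only [Pi.zero_apply, add_zero]
  exact key _ _

lemma sats_or {x : Fin n → ZMod 2} {f g : Eqn n}
    (hfg : ¬ Sats x (f + g)) (hf : ¬ Sats x f) : Sats x g := by
  have key : ∀ a b c d : ZMod 2, ¬ (a + c = b + d) → ¬ (a = b) → c = d := by decide
  have hsum : (∑ i, (f + g).1 i * x i) =
      (∑ i, f.1 i * x i) + (∑ i, g.1 i * x i) := by
    rw [← Finset.sum_add_distrib]
    exact Finset.sum_congr rfl fun i _ => by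
      show (f.1 i + g.1 i) * x i = _
      ring
  unfold Sats at *
  rw [hsum] at hfg
  exact key _ _ _ _ hfg hf

lemma mem_linneg {C : Clause n} {e : Eqn n} (he : e ∈ C) : e + oneEq n ∈ linneg C :=
  Submodule.subset_span ⟨e, he, rfl⟩

lemma linneg_le {C D : Clause n} (h : ∀ e ∈ C, e + oneEq n ∈ linneg D) :
    linneg C ≤ linneg D := by
  apply Submodule.span_le.mpr
  rintro _ ⟨e, he, rfl⟩
  exact h e he

lemma addB_le {A B K S : Clause n} {f g : Eqn n}
    (hK : K = insert (f + g) (A.erase f ∪ B.erase g)) (hsub : K ⊆ S)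
    (hf1 : f + oneEq n ∈ S) : linneg B ≤ linneg S := by
  apply linneg_le
  intro e he
  have hfgS : f + g ∈ S := hsub (hK ▸ Finset.mem_insert_self _ _)
  by_cases hg : e = g
  · subst hg
    have hf : f ∈ linneg S := by
      have h := mem_linneg (C := S) hf1
      rwa [add_one_one] at h
    have hfg : f + e + oneEq n ∈ linneg S := mem_linneg hfgS
    have heq : f + (f + e + oneEq n) = e + oneEq n := by
      have h : f + (f + e + oneEq n) = (f + f) + (e + oneEq n) := by abel
      rw [h, eqn_add_self, zero_add]
    exact heq ▸ Submodule.add_mem _ hf hfg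
  · exact mem_linneg (hsub (hK ▸ Finset.mem_insert_of_mem
      (Finset.mem_union_right _ (Finset.mem_erase.mpr ⟨hg, he⟩))))

lemma add_res_eq {A B K : Clause n} {f g : Eqn n}
    (hK : K = insert (f + g) (A.erase f ∪ B.erase g))
    (hnot : f + oneEq n ∉ K) :
    K = A.erase f ∪ (insert (f + oneEq n) K).erase (f + oneEq n) := by
  rw [Finset.erase_insert hnot]
  have hsub : A.erase f ⊆ K := fun e he =>
    hK ▸ Finset.mem_insert_of_mem (Finset.mem_union_left _ he)
  exact (Finset.union_eq_right.mpr hsub).symm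

lemma insert_nontaut {K : Clause n} {h : Eqn n} {x : Fin n → ZMod 2}
    (hx : ∀ e ∈ K, ¬ Sats x e) (hh : Sats x h) :
    NonTaut (insert (h + oneEq n) K) := by
  refine ⟨x, fun e he => ?_⟩
  rcases Finset.mem_insert.mp he with rfl | he'
  · intro hs
    exact (sats_add_one x h).mp hs hh
  · exact hx e he'

lemma countJ_succ (m : ℕ) (J0 : ℕ → Just n) (p : Just n → Bool) :
    countJ (m+1) J0 p = countJ m J0 p + (if p (J0 m) then 1 else 0) := by
  unfold countJ
  rw [Finset.range_add_one, Finset.filter_insert]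
  by_cases h : p (J0 m)
  · rw [if_pos h, if_pos h, Finset.card_insert_of_notMem
      (fun hc => Finset.notMem_range_self (Finset.mem_filter.mp hc).1)]
  · rw [if_neg h, if_neg h, add_zero]

end Aux

section Sim

variable {n : ℕ} (L : ℕ → Clause n) (J : ℕ → Just n)

/-- whether an `add` step needs two new lines -/
def twoP (k : ℕ) : Just n → Prop
  | .add i j _ _ => ¬ (linneg (L j) ≤ linneg (L k)) ∧ ¬ (linneg (L i) ≤ linneg (L k))
  | _ => False

noncomputable def sig : ℕ → ℕ
  | 0 => 0
  | k+1 => sig k + (if twoP L k (J k) then 2 else 1)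

lemma sig_lt (k : ℕ) : sig L J k < sig L J (k+1) := by
  show sig L J k < sig L J k + _
  split <;> omega

lemma sig_strictMono : StrictMono (sig L J) :=
  strictMono_nat_of_lt_succ (sig_lt L J)

lemma le_sig (k : ℕ) : k ≤ sig L J k := (sig_strictMono L J).le_apply

lemma sig_le_two (k : ℕ) : sig L J k ≤ 2 * k := by
  induction k with
  | zero => simp [sig]
  | succ k ih =>
      show sig L J k + _ ≤ _
      split <;> omega

noncomputable def invf (m : ℕ) : ℕ := Nat.findGreatest (fun k => sig L J k ≤ m) m

lemma invf_eq {k m : ℕ} (h1 : sig L J k ≤ m) (h2 : m < sig L J (k+1)) :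
    invf L J m = k := by
  have hk_le : k ≤ invf L J m := Nat.le_findGreatest (le_trans (le_sig L J k) h1) h1
  have hle : sig L J (invf L J m) ≤ m :=
    Nat.findGreatest_spec (P := fun k => sig L J k ≤ m) (m := k)
      (le_trans (le_sig L J k) h1) h1
  by_contra hne
  have hlt : k + 1 ≤ invf L J m := by omega
  exact absurd (le_trans ((sig_strictMono L J).monotone hlt) hle) (by omega)

lemma invf_le (m : ℕ) : sig L J (invf L J m) ≤ m :=
  Nat.findGreatest_spec (P := fun k => sig L J k ≤ m) (m := 0)
    (Nat.zero_le m) (Nat.zero_le m)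

lemma invf_lt (m : ℕ) : m < sig L J (invf L J m + 1) := by
  by_contra hcon
  push_neg at hcon
  have h := Nat.le_findGreatest (P := fun k => sig L J k ≤ m) (n := m)
    (le_trans (le_sig L J _) hcon) hcon
  unfold invf at h
  omega

noncomputable def rho (k : ℕ) : ℕ := sig L J (k+1) - 1

lemma rho_succ (k : ℕ) : rho L J k + 1 = sig L J (k+1) := by
  have h1 : 1 ≤ sig L J (k+1) := le_trans (by omega) (le_sig L J (k+1))
  unfold rho; omega

lemma sig_le_rho (k : ℕ) : sig L J k ≤ rho L J k := by
  have := sig_lt L J k; unfold rho; omega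

lemma rho_lt_sig (k : ℕ) : rho L J k < sig L J (k+1) := by
  have := rho_succ L J k; omega

lemma rho_mono {i k : ℕ} (h : i < k) : rho L J i < rho L J k := by
  have h1 := rho_succ L J i
  have h2 : sig L J (i+1) ≤ sig L J k := (sig_strictMono L J).monotone h
  have h3 := sig_le_rho L J k
  omega

lemma invf_rho (k : ℕ) : invf L J (rho L J k) = k :=
  invf_eq L J (sig_le_rho L J k) (rho_lt_sig L J k)

lemma invf_sig (k : ℕ) : invf L J (sig L J k) = k :=
  invf_eq L J le_rfl (sig_lt L J k)

lemma sig_two {k : ℕ} (h : twoP L k (J k)) : sig L J (k+1) = sig L J k + 2 := by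
  show sig L J k + _ = _
  rw [if_pos h]

lemma sig_one {k : ℕ} (h : ¬ twoP L k (J k)) : sig L J (k+1) = sig L J k + 1 := by
  show sig L J k + _ = _
  rw [if_neg h]

lemma rho_one {k : ℕ} (h : ¬ twoP L k (J k)) : rho L J k = sig L J k := by
  have := sig_one L J h; unfold rho; omega

/-- intermediate clause for a two-line `add` step -/
noncomputable def wClP (k : ℕ) : Just n → Clause n
  | .add _ _ f g =>
      if NonTaut (insert (f + oneEq n) (L k)) then insert (f + oneEq n) (L k)
      else insert (g + oneEq n) (L k)
  | _ => ∅

/-- justification of the intermediate line -/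
noncomputable def wP (k : ℕ) : Just n → Just n
  | .add i j f _ =>
      if NonTaut (insert (f + oneEq n) (L k)) then .weak (rho L J j)
      else .weak (rho L J i)
  | _ => .ax

/-- justification of the main line -/
noncomputable def realP (k : ℕ) : Just n → Just n
  | .ax => .ax
  | .cob i => .weak (rho L J i)
  | .add i j f g =>
      if twoP L k (Just.add i j f g) then
        (if NonTaut (insert (f + oneEq n) (L k)) then .res (rho L J i) (sig L J k) f
         else .res (rho L J j) (sig L J k) g)
      else (if linneg (L j) ≤ linneg (L k) then .weak (rho L J j) else .weak (rho L J i))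
  | _ => .ax

noncomputable def L2 (m : ℕ) : Clause n :=
  if m + 1 = sig L J (invf L J m + 1) then L (invf L J m)
  else wClP L (invf L J m) (J (invf L J m))

noncomputable def J2 (m : ℕ) : Just n :=
  if m + 1 = sig L J (invf L J m + 1) then realP L J (invf L J m) (J (invf L J m))
  else wP L J (invf L J m) (J (invf L J m))

lemma L2_rho (k : ℕ) : L2 L J (rho L J k) = L k := by
  unfold L2; rw [invf_rho, if_pos (rho_succ L J k)]

lemma J2_rho (k : ℕ) : J2 L J (rho L J k) = realP L J k (J k) := by
  unfold J2; rw [invf_rho, if_pos (rho_succ L J k)]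

lemma L2_sig_two {k : ℕ} (h : twoP L k (J k)) :
    L2 L J (sig L J k) = wClP L k (J k) := by
  have h2 := sig_two L J h
  unfold L2; rw [invf_sig, if_neg (by omega)]

lemma J2_sig_two {k : ℕ} (h : twoP L k (J k)) :
    J2 L J (sig L J k) = wP L J k (J k) := by
  have h2 := sig_two L J h
  unfold J2; rw [invf_sig, if_neg (by omega)]

lemma J2_shape (m : ℕ) :
    (J2 L J m).isAx ∨ (J2 L J m).isRes ∨ (J2 L J m).isWeak := by
  unfold J2
  split
  · generalize J (invf L J m) = jk
    rcases jk with _ | ⟨i, j, f⟩ | i | ⟨i, j, f, g⟩ | i <;>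
      simp only [realP, Just.isAx, Just.isRes, Just.isWeak] <;>
      first
        | simp
        | (split_ifs <;> simp [Just.isAx, Just.isRes, Just.isWeak])
  · generalize J (invf L J m) = jk
    rcases jk with _ | ⟨i, j, f⟩ | i | ⟨i, j, f, g⟩ | i <;>
      simp only [wP, Just.isAx, Just.isRes, Just.isWeak] <;>
      first
        | simp
        | (split_ifs <;> simp [Just.isAx, Just.isRes, Just.isWeak])

end Sim

section Main

variable {n : ℕ} (L : ℕ → Clause n) (J : ℕ → Just n)

lemma counts_le (N : ℕ)
    (honly : ∀ k < N, (J k).isAx ∨ (J k).isAdd ∨ (J k).isCob) :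
    ∀ k, k ≤ N →
      countJ (sig L J k) (J2 L J) Just.isRes ≤ countJ k J Just.isAdd ∧
      countJ (sig L J k) (J2 L J) Just.isWeak ≤
        countJ k J Just.isAdd + countJ k J Just.isCob ∧
      countJ (sig L J k) (J2 L J) Just.isAx ≤ countJ k J Just.isAx := by
  intro k
  induction k with
  | zero => intro _; simp [countJ, sig]
  | succ k ih =>
    intro hk1
    obtain ⟨ihR, ihW, ihA⟩ := ih (by omega)
    have hkN : k < N := by omega
    have hA := countJ_succ k J Just.isAdd
    have hC := countJ_succ k J Just.isCob
    have hX := countJ_succ k J Just.isAx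
    by_cases htwo : twoP L k (J k)
    · obtain ⟨i, j, f, g, hJk⟩ : ∃ i j f g, J k = Just.add i j f g := by
        rcases hJk : J k with _ | ⟨i, j, f⟩ | i | ⟨i, j, f, g⟩ | i <;>
          rw [hJk] at htwo <;>
          first
            | exact ⟨_, _, _, _, rfl⟩
            | exact absurd htwo (by simp [twoP])
      have hs : sig L J (k+1) = sig L J k + 2 := sig_two L J htwo
      have hJ2w := J2_sig_two L J htwo
      have hJ2r : J2 L J (sig L J k + 1) = realP L J k (J k) := by
        have h := rho_succ L J k
        have h2 : sig L J k + 1 = rho L J k := by omega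
        rw [h2, J2_rho]
      rw [hJk] at hJ2w hJ2r
      simp only [wP, realP] at hJ2w hJ2r
      rw [if_pos (hJk ▸ htwo)] at hJ2r
      have hvW : ∃ w, J2 L J (sig L J k) = Just.weak w := by
        rw [hJ2w]; split_ifs <;> exact ⟨_, rfl⟩
      have hvR : ∃ a b c, J2 L J (sig L J k + 1) = Just.res a b c := by
        rw [hJ2r]; split_ifs <;> exact ⟨_, _, _, rfl⟩
      obtain ⟨w, hvW⟩ := hvW
      obtain ⟨a, b, c, hvR⟩ := hvR
      have e2 : ∀ p : Just n → Bool,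
          countJ (sig L J (k+1)) (J2 L J) p = countJ (sig L J k) (J2 L J) p +
            (if p (J2 L J (sig L J k)) then 1 else 0) +
            (if p (J2 L J (sig L J k + 1)) then 1 else 0) := by
        intro p
        rw [hs, show sig L J k + 2 = (sig L J k + 1) + 1 from rfl,
          countJ_succ, countJ_succ]
      rw [hJk] at hA hC hX
      simp only [Just.isAdd, Just.isCob, Just.isAx] at hA hC hX
      refine ⟨?_, ?_, ?_⟩ <;>
        rw [e2, hvW, hvR] <;>
        simp only [Just.isRes, Just.isWeak, Just.isAx] <;>
        simp [hA, hC, hX] <;>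
        omega
    · have hs : sig L J (k+1) = sig L J k + 1 := sig_one L J htwo
      have hJ2r : J2 L J (sig L J k) = realP L J k (J k) := by
        rw [← rho_one L J htwo, J2_rho]
      have e1 : ∀ p : Just n → Bool,
          countJ (sig L J (k+1)) (J2 L J) p = countJ (sig L J k) (J2 L J) p +
            (if p (J2 L J (sig L J k)) then 1 else 0) := by
        intro p
        rw [hs, countJ_succ]
      rcases hJk : J k with _ | ⟨i, j, f⟩ | i | ⟨i, j, f, g⟩ | i
      · -- ax
        rw [hJk] at hJ2r
        simp only [realP] at hJ2r
        rw [hJk] at hA hC hX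
        simp only [Just.isAdd, Just.isCob, Just.isAx] at hA hC hX
        refine ⟨?_, ?_, ?_⟩ <;>
          rw [e1, hJ2r] <;>
          simp only [Just.isRes, Just.isWeak, Just.isAx] <;>
          simp [hA, hC, hX] <;>
          omega
      · rcases honly k hkN with h | h | h <;> rw [hJk] at h <;>
          simp [Just.isAx, Just.isAdd, Just.isCob] at h
      · rcases honly k hkN with h | h | h <;> rw [hJk] at h <;>
          simp [Just.isAx, Just.isAdd, Just.isCob] at h
      · -- add, one line
        rw [hJk] at hJ2r
        simp only [realP] at hJ2r
        rw [if_neg (hJk ▸ htwo)] at hJ2r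
        have hvW : ∃ w, J2 L J (sig L J k) = Just.weak w := by
          rw [hJ2r]; split_ifs <;> exact ⟨_, rfl⟩
        obtain ⟨w, hvW⟩ := hvW
        rw [hJk] at hA hC hX
        simp only [Just.isAdd, Just.isCob, Just.isAx] at hA hC hX
        refine ⟨?_, ?_, ?_⟩ <;>
          rw [e1, hvW] <;>
          simp only [Just.isRes, Just.isWeak, Just.isAx] <;>
          simp [hA, hC, hX] <;>
          omega
      · -- cob
        rw [hJk] at hJ2r
        simp only [realP] at hJ2r
        rw [hJk] at hA hC hX
        simp only [Just.isAdd, Just.isCob, Just.isAx] at hA hC hX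
        refine ⟨?_, ?_, ?_⟩ <;>
          rw [e1, hJ2r] <;>
          simp only [Just.isRes, Just.isWeak, Just.isAx] <;>
          simp [hA, hC, hX] <;>
          omega

lemma valid2 (Δ : Set (Clause n)) (N : ℕ)
    (hvalid : ValidProof Δ N L J)
    (honly : ∀ k < N, (J k).isAx ∨ (J k).isAdd ∨ (J k).isCob) :
    ValidProof Δ (sig L J N) (L2 L J) (J2 L J) := by
  intro m hm
  set k := invf L J m with hkdef
  have h1 : sig L J k ≤ m := invf_le L J m
  have h2 : m < sig L J (k+1) := invf_lt L J m
  have hkN : k < N := by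
    by_contra hcon
    push_neg at hcon
    exact absurd hm (not_lt.mpr (le_trans ((sig_strictMono L J).monotone hcon) h1))
  obtain ⟨hNT, hSO⟩ := hvalid k hkN
  rcases hJk : J k with _ | ⟨i, j, f⟩ | i | ⟨i, j, f, g⟩ | i
  · -- ax
    have htwo : ¬ twoP L k (J k) := by rw [hJk]; simp [twoP]
    have hm1 : m = rho L J k := by
      have ha := sig_one L J htwo
      have hb := rho_one L J htwo
      omega
    rw [hm1]
    refine ⟨by rw [L2_rho]; exact hNT, ?_⟩
    rw [J2_rho, hJk]
    show L2 L J (rho L J k) ∈ Δ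
    rw [L2_rho]
    rw [hJk] at hSO
    exact hSO
  · rcases honly k hkN with h | h | h <;> rw [hJk] at h <;>
      simp [Just.isAx, Just.isAdd, Just.isCob] at h
  · rcases honly k hkN with h | h | h <;> rw [hJk] at h <;>
      simp [Just.isAx, Just.isAdd, Just.isCob] at h
  · -- add
    rw [hJk] at hSO
    obtain ⟨hik, hjk, hfi, hgj, hLk⟩ := hSO
    have hLk' : L k = insert (g + f) ((L j).erase g ∪ (L i).erase f) := by
      rw [hLk, add_comm f g, Finset.union_comm]
    by_cases htwo : twoP L k (J k)
    · have htwo' : ¬ (linneg (L j) ≤ linneg (L k)) ∧ ¬ (linneg (L i) ≤ linneg (L k)) := by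
        rw [hJk] at htwo
        exact htwo
      have hf1 : f + oneEq n ∉ L k := fun hmem =>
        htwo'.1 (addB_le hLk Finset.Subset.rfl hmem)
      have hg1 : g + oneEq n ∉ L k := fun hmem =>
        htwo'.2 (addB_le hLk' Finset.Subset.rfl hmem)
      have hnt2 : NonTaut (insert (f + oneEq n) (L k)) ∨
          NonTaut (insert (g + oneEq n) (L k)) := by
        obtain ⟨x, hx⟩ := hNT
        have hfg : ¬ Sats x (f + g) := hx _ (hLk ▸ Finset.mem_insert_self _ _)
        by_cases hf : Sats x f
        · exact Or.inl (insert_nontaut hx hf)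
        · exact Or.inr (insert_nontaut hx (sats_or hfg hf))
      have hs2 := sig_two L J htwo
      have hrs := rho_succ L J k
      have hcase : m = sig L J k ∨ m = rho L J k := by omega
      by_cases hnt1 : NonTaut (insert (f + oneEq n) (L k))
      · have hW : wClP L k (J k) = insert (f + oneEq n) (L k) := by
          rw [hJk]; simp only [wClP]; rw [if_pos hnt1]
        rcases hcase with hm1 | hm1
        · rw [hm1]
          refine ⟨by rw [L2_sig_two L J htwo, hW]; exact hnt1, ?_⟩
          rw [J2_sig_two L J htwo, hJk]
          simp only [wP]
          rw [if_pos hnt1]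
          refine ⟨?_, ?_⟩
          · have ha := rho_succ L J j
            have hb : sig L J (j+1) ≤ sig L J k := (sig_strictMono L J).monotone hjk
            omega
          · rw [L2_rho, L2_sig_two L J htwo, hW]
            exact addB_le hLk (Finset.subset_insert _ _) (Finset.mem_insert_self _ _)
        · rw [hm1]
          refine ⟨by rw [L2_rho]; exact hNT, ?_⟩
          rw [J2_rho, hJk]
          simp only [realP]
          rw [if_pos (hJk ▸ htwo), if_pos hnt1]
          refine ⟨rho_mono L J hik, by omega, ?_, ?_, ?_⟩
          · rw [L2_rho]; exact hfi
          · rw [L2_sig_two L J htwo, hW]; exact Finset.mem_insert_self _ _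
          · rw [L2_rho, L2_rho, L2_sig_two L J htwo, hW]
            exact add_res_eq hLk hf1
      · have hnt1' : NonTaut (insert (g + oneEq n) (L k)) := hnt2.resolve_left hnt1
        have hW : wClP L k (J k) = insert (g + oneEq n) (L k) := by
          rw [hJk]; simp only [wClP]; rw [if_neg hnt1]
        rcases hcase with hm1 | hm1
        · rw [hm1]
          refine ⟨by rw [L2_sig_two L J htwo, hW]; exact hnt1', ?_⟩
          rw [J2_sig_two L J htwo, hJk]
          simp only [wP]
          rw [if_neg hnt1]
          refine ⟨?_, ?_⟩
          · have ha := rho_succ L J i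
            have hb : sig L J (i+1) ≤ sig L J k := (sig_strictMono L J).monotone hik
            omega
          · rw [L2_rho, L2_sig_two L J htwo, hW]
            exact addB_le hLk' (Finset.subset_insert _ _) (Finset.mem_insert_self _ _)
        · rw [hm1]
          refine ⟨by rw [L2_rho]; exact hNT, ?_⟩
          rw [J2_rho, hJk]
          simp only [realP]
          rw [if_pos (hJk ▸ htwo), if_neg hnt1]
          refine ⟨rho_mono L J hjk, by omega, ?_, ?_, ?_⟩
          · rw [L2_rho]; exact hgj
          · rw [L2_sig_two L J htwo, hW]; exact Finset.mem_insert_self _ _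
          · rw [L2_rho, L2_rho, L2_sig_two L J htwo, hW]
            exact add_res_eq hLk' hg1
    · -- one weakening suffices
      have hor : linneg (L j) ≤ linneg (L k) ∨ linneg (L i) ≤ linneg (L k) := by
        rw [hJk] at htwo
        by_contra hcon
        push_neg at hcon
        exact htwo ⟨hcon.1, hcon.2⟩
      have hm1 : m = rho L J k := by
        have ha := sig_one L J htwo
        have hb := rho_one L J htwo
        omega
      rw [hm1]
      refine ⟨by rw [L2_rho]; exact hNT, ?_⟩
      rw [J2_rho, hJk]
      simp only [realP]
      rw [if_neg (hJk ▸ htwo)]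
      by_cases hjle : linneg (L j) ≤ linneg (L k)
      · rw [if_pos hjle]
        exact ⟨rho_mono L J hjk, by rw [L2_rho, L2_rho]; exact hjle⟩
      · rw [if_neg hjle]
        exact ⟨rho_mono L J hik, by rw [L2_rho, L2_rho]; exact hor.resolve_left hjle⟩
  · -- cob
    rw [hJk] at hSO
    obtain ⟨hik, hlin⟩ := hSO
    have htwo : ¬ twoP L k (J k) := by rw [hJk]; simp [twoP]
    have hm1 : m = rho L J k := by
      have ha := sig_one L J htwo
      have hb := rho_one L J htwo
      omega
    rw [hm1]
    refine ⟨by rw [L2_rho]; exact hNT, ?_⟩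
    rw [J2_rho, hJk]
    simp only [realP]
    exact ⟨rho_mono L J hik, by rw [L2_rho, L2_rho]; exact le_of_eq hlin⟩

end Main

/-- Every refutation of `Δ` using only addition and change of
basis can be converted into a `Res(⊕)` refutation of `Δ` using only resolution
and weakening, where each addition step is replaced by one weakening followed by
one resolution and each change-of-basis step becomes a weakening; in particular
the new refutation has at most twice as many inference steps. -/
theorem stmt2 {n : ℕ} (Δ : Set (Clause n)) (N : ℕ)
    (L : ℕ → Clause n) (J : ℕ → Just n)
    (hproof : Refutes Δ N L J)
    (honly : ∀ k < N, (J k).isAx ∨ (J k).isAdd ∨ (J k).isCob) :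
    ∃ (N' : ℕ) (L' : ℕ → Clause n) (J' : ℕ → Just n),
      Refutes Δ N' L' J' ∧
      (∀ k < N', (J' k).isAx ∨ (J' k).isRes ∨ (J' k).isWeak) ∧
      countJ N' J' Just.isRes ≤ countJ N J Just.isAdd ∧
      countJ N' J' Just.isWeak ≤ countJ N J Just.isAdd + countJ N J Just.isCob ∧
      countJ N' J' Just.isAx ≤ countJ N J Just.isAx ∧
      N' ≤ 2 * N := by
  obtain ⟨hvalid, k0, hk0N, hk0⟩ := hproof
  refine ⟨sig L J N, L2 L J, J2 L J,
    ⟨valid2 L J Δ N hvalid honly, ⟨rho L J k0, ?_, ?_⟩⟩,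
    fun m _ => J2_shape L J m, ?_, ?_, ?_, sig_le_two L J N⟩
  · have ha := rho_succ L J k0
    have hb : sig L J (k0+1) ≤ sig L J N := (sig_strictMono L J).monotone hk0N
    omega
  · rw [L2_rho]; exact hk0
  · exact (counts_le L J N honly N le_rfl).1
  · exact (counts_le L J N honly N le_rfl).2.1
  · exact (counts_le L J N honly N le_rfl).2.2


end XorSAT
end

section
/- Let U be a consistent set of affine equations and f an equation with f ∉ span(U) and f+𝟏 ∉ span(U). Let C and D be non-tautological linear clauses with ⟨C⟩ ⊆ span(U, f), ⟨D⟩ ⊆ span(U, f+𝟏), ⟨C⟩ ⊄ span(U), and ⟨D⟩ ⊄ span(U). Suppose C ≡ C' ∨ g and D ≡ D' ∨ h are isolations of f, i.e., ⟨C' ∨ g⟩ = ⟨C⟩, ⟨D' ∨ h⟩ = ⟨D⟩, and ⟨C'⟩, ⟨D'⟩ ⊆ span(U). Then span(⟨C'⟩ ∪ ⟨D'⟩ ∪ {g+h+𝟏}) = span(⟨C⟩ ∪ ⟨D⟩ ∪ {𝟏}) ∩ span(U); in other words, the linear negation of C' ∨ D' ∨ (g+h) equals span(⟨C⟩, ⟨D⟩,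 𝟏) ∩ span(U) regardless of the choice of isolations. -/
namespace XorSAT

lemma zmod2_add_self : ∀ a : ZMod 2, a + a = 0 := by decide

lemma zmod2_cases : ∀ a : ZMod 2, a = 0 ∨ a = 1 := by decide

lemma add_self {n : ℕ} (v : Eqn n) : v + v = 0 := by
  refine Prod.ext ?_ ?_
  · funext i
    simpa using zmod2_add_self (v.1 i)
  · simpa using zmod2_add_self v.2

lemma linneg_insert {n : ℕ} (x : Eqn n) (S : Clause n) :
    linneg (insert x S) = Submodule.span (ZMod 2) {x + oneEq n} ⊔ linneg S := by
  rw [linneg, Finset.coe_insert, Set.image_insert_eq, Submodule.span_insert]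
  rfl

lemma linneg_union {n : ℕ} (A B : Clause n) :
    linneg (A ∪ B) = linneg A ⊔ linneg B := by
  rw [linneg, Finset.coe_union, Set.image_union, Submodule.span_union]
  rfl

def evalMap {n : ℕ} (x : Fin n → ZMod 2) : Eqn n →ₗ[ZMod 2] ZMod 2 where
  toFun e := (∑ i, e.1 i * x i) + e.2
  map_add' a b := by
    simp [Prod.fst_add, Prod.snd_add, add_mul, Finset.sum_add_distrib]
    ring
  map_smul' c a := by
    simp only [Prod.smul_fst, Prod.smul_snd, smul_eq_mul, Pi.smul_apply, RingHom.id_apply]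
    rw [mul_add, Finset.mul_sum]
    simp [mul_assoc]

lemma one_notin_spn {n : ℕ} {U : Set (Eqn n)} (hU : Consistent U) : oneEq n ∉ spn U := by
  obtain ⟨x, hx⟩ := hU
  intro hmem
  have hker : spn U ≤ LinearMap.ker (evalMap x) := by
    refine Submodule.span_le.mpr ?_
    intro e he
    have := hx e he
    simp [LinearMap.mem_ker, evalMap, Sats] at this ⊢
    rw [this]
    exact zmod2_add_self e.2
  have := hker hmem
  simp [LinearMap.mem_ker, evalMap, oneEq] at this

/-- Affine resolution is independent of the choice of isolations:
if `C ≡ C' ∨ g` and `D ≡ D' ∨ h` isolate `f` (w.r.t. `U`) in `C` and `D`, then the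
linear negation of `C' ∨ D' ∨ (g+h)`, i.e. `span(⟨C'⟩ ∪ ⟨D'⟩ ∪ {g+h+𝟏})`, equals
`span(⟨C⟩ ∪ ⟨D⟩ ∪ {𝟏}) ∩ span(U)`. -/
theorem stmt4 {n : ℕ} (U : Set (Eqn n)) (hU : Consistent U) (f : Eqn n)
    (hf : f ∉ spn U) (hf1 : f + oneEq n ∉ spn U)
    (C D : Clause n) (hCt : NonTaut C) (hDt : NonTaut D)
    (hC : linneg C ≤ spn (insert f U))
    (hD : linneg D ≤ spn (insert (f + oneEq n) U))
    (hCn : ¬ linneg C ≤ spn U) (hDn : ¬ linneg D ≤ spn U)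
    (C' D' : Clause n) (g h : Eqn n)
    (hCg : linneg (insert g C') = linneg C) (hC' : linneg C' ≤ spn U)
    (hDh : linneg (insert h D') = linneg D) (hD' : linneg D' ≤ spn U) :
    linneg (insert (g + h) (C' ∪ D')) =
      (linneg C ⊔ linneg D ⊔ Submodule.span (ZMod 2) {oneEq n}) ⊓ spn U ∧
    linneg C' ⊔ linneg D' ⊔ Submodule.span (ZMod 2) {g + h + oneEq n} =
      (linneg C ⊔ linneg D ⊔ Submodule.span (ZMod 2) {oneEq n}) ⊓ spn U := by
  have hone := one_notin_spn hU
  -- structure of linneg C and linneg D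
  have hCeq : linneg C = Submodule.span (ZMod 2) {g + oneEq n} ⊔ linneg C' := by
    rw [← hCg, linneg_insert]
  have hDeq : linneg D = Submodule.span (ZMod 2) {h + oneEq n} ⊔ linneg D' := by
    rw [← hDh, linneg_insert]
  have hgmem : g + oneEq n ∈ linneg C := by
    rw [hCeq]
    exact Submodule.mem_sup_left (Submodule.mem_span_singleton_self _)
  have hhmem : h + oneEq n ∈ linneg D := by
    rw [hDeq]
    exact Submodule.mem_sup_left (Submodule.mem_span_singleton_self _)
  have hg1 : g + oneEq n ∉ spn U := by
    intro hin
    refine hCn ?_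
    rw [hCeq]
    exact sup_le (Submodule.span_le.mpr (Set.singleton_subset_iff.mpr hin)) hC'
  have hh1 : h + oneEq n ∉ spn U := by
    intro hin
    refine hDn ?_
    rw [hDeq]
    exact sup_le (Submodule.span_le.mpr (Set.singleton_subset_iff.mpr hin)) hD'
  -- decompose g + 1 = f + z with z ∈ spn U
  obtain ⟨z, hzU, hgf⟩ : ∃ z ∈ spn U, g + oneEq n = f + z := by
    have h2 : g + oneEq n ∈ Submodule.span (ZMod 2) (insert f U) := hC hgmem
    rw [Submodule.span_insert] at h2
    obtain ⟨y, hy, z, hzU, hsum⟩ := Submodule.mem_sup.mp h2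
    obtain ⟨a, rfl⟩ := Submodule.mem_span_singleton.mp hy
    rcases zmod2_cases a with rfl | rfl
    · exfalso
      refine hg1 ?_
      rw [zero_smul, zero_add] at hsum
      exact hsum ▸ hzU
    · rw [one_smul] at hsum
      exact ⟨z, hzU, hsum.symm⟩
  -- decompose h + 1 = (f + 1) + z' with z' ∈ spn U
  obtain ⟨z', hz'U, hhf⟩ : ∃ z' ∈ spn U, h + oneEq n = (f + oneEq n) + z' := by
    have h2 : h + oneEq n ∈ Submodule.span (ZMod 2) (insert (f + oneEq n) U) := hD hhmem
    rw [Submodule.span_insert] at h2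
    obtain ⟨y, hy, z', hz'U, hsum⟩ := Submodule.mem_sup.mp h2
    obtain ⟨a, rfl⟩ := Submodule.mem_span_singleton.mp hy
    rcases zmod2_cases a with rfl | rfl
    · exfalso
      refine hh1 ?_
      rw [zero_smul, zero_add] at hsum
      exact hsum ▸ hz'U
    · rw [one_smul] at hsum
      exact ⟨z', hz'U, hsum.symm⟩
  have hzz : g + h + oneEq n = z + z' := by
    linear_combination hgf + hhf + add_self f
  have hghU : g + h + oneEq n ∈ spn U := by
    rw [hzz]; exact add_mem hzU hz'U
  have hghL : g + h + oneEq n ∈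
      linneg C ⊔ linneg D ⊔ Submodule.span (ZMod 2) {oneEq n} := by
    have e1 : g + h + oneEq n = (g + oneEq n) + (h + oneEq n) + oneEq n := by
      linear_combination - add_self (oneEq n)
    rw [e1]
    exact add_mem (add_mem
      (Submodule.mem_sup_left (Submodule.mem_sup_left hgmem))
      (Submodule.mem_sup_left (Submodule.mem_sup_right hhmem)))
      (Submodule.mem_sup_right (Submodule.mem_span_singleton_self _))
  have key : linneg C' ⊔ linneg D' ⊔ Submodule.span (ZMod 2) {g + h + oneEq n} =
      (linneg C ⊔ linneg D ⊔ Submodule.span (ZMod 2) {oneEq n}) ⊓ spn U := by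
    refine le_antisymm ?_ ?_
    · refine sup_le (sup_le ?_ ?_) ?_
      · refine le_inf ?_ hC'
        refine le_trans ?_ le_sup_left
        refine le_trans ?_ (le_sup_left : linneg C ≤ _)
        rw [hCeq]; exact le_sup_right
      · refine le_inf ?_ hD'
        refine le_trans ?_ le_sup_left
        refine le_trans ?_ (le_sup_right : linneg D ≤ _)
        rw [hDeq]; exact le_sup_right
      · refine Submodule.span_le.mpr (Set.singleton_subset_iff.mpr ?_)
        exact Submodule.mem_inf.mpr ⟨hghL, hghU⟩
    · intro v hv
      obtain ⟨hvL, hvU⟩ := Submodule.mem_inf.mp hv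
      obtain ⟨cd, hcd, s, hs, e_v⟩ := Submodule.mem_sup.mp hvL
      obtain ⟨c, hc, d, hd, e_cd⟩ := Submodule.mem_sup.mp hcd
      obtain ⟨ε, hs'⟩ := Submodule.mem_span_singleton.mp hs
      rw [hCeq] at hc
      rw [hDeq] at hd
      obtain ⟨yc, hyc', c'', hc'', e_c⟩ := Submodule.mem_sup.mp hc
      obtain ⟨yd, hyd', d'', hd'', e_d⟩ := Submodule.mem_sup.mp hd
      obtain ⟨α, hyc⟩ := Submodule.mem_span_singleton.mp hyc'
      obtain ⟨β, hyd⟩ := Submodule.mem_span_singleton.mp hyd'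
      have master : v = α • (g + oneEq n) + c'' + (β • (h + oneEq n) + d'') + ε • oneEq n := by
        rw [← e_v, ← e_cd, ← e_c, ← e_d, ← hyc, ← hyd, ← hs']
      have memc : c'' ∈ linneg C' ⊔ linneg D' ⊔ Submodule.span (ZMod 2) {g + h + oneEq n} :=
        Submodule.mem_sup_left (Submodule.mem_sup_left hc'')
      have memd : d'' ∈ linneg C' ⊔ linneg D' ⊔ Submodule.span (ZMod 2) {g + h + oneEq n} :=
        Submodule.mem_sup_left (Submodule.mem_sup_right hd'')
      have memgh : g + h + oneEq n ∈
          linneg C' ⊔ linneg D' ⊔ Submodule.span (ZMod 2) {g + h + oneEq n} :=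
        Submodule.mem_sup_right (Submodule.mem_span_singleton_self _)
      have hcU : c'' ∈ spn U := hC' hc''
      have hdU : d'' ∈ spn U := hD' hd''
      rcases zmod2_cases α with rfl | rfl <;> rcases zmod2_cases β with rfl | rfl <;>
        rcases zmod2_cases ε with rfl | rfl <;>
        simp only [zero_smul, one_smul, zero_add, add_zero] at master
      · -- α=0, β=0, ε=0 : v = c'' + d''
        rw [master]; exact add_mem memc memd
      · -- α=0, β=0, ε=1 : contradiction, 1 ∈ spn U
        exfalso
        refine hone ?_
        have e : oneEq n = v + c'' + d'' := by
          linear_combination -master - add_self c'' - add_self d''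
        rw [e]; exact add_mem (add_mem hvU hcU) hdU
      · -- α=0, β=1, ε=0 : f + 1 ∈ spn U
        exfalso
        refine hf1 ?_
        have e : f + oneEq n = v + c'' + d'' + z' := by
          linear_combination -master - hhf - add_self c'' - add_self d'' - add_self z'
        rw [e]; exact add_mem (add_mem (add_mem hvU hcU) hdU) hz'U
      · -- α=0, β=1, ε=1 : f ∈ spn U
        exfalso
        refine hf ?_
        have e : f = v + c'' + d'' + z' := by
          linear_combination -master - hhf - add_self c'' - add_self d'' - add_self z'
            - add_self (oneEq n)
        rw [e]; exact add_mem (add_mem (add_mem hvU hcU) hdU) hz'U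
      · -- α=1, β=0, ε=0 : f ∈ spn U
        exfalso
        refine hf ?_
        have e : f = v + c'' + d'' + z := by
          linear_combination -master - hgf - add_self c'' - add_self d'' - add_self z
        rw [e]; exact add_mem (add_mem (add_mem hvU hcU) hdU) hzU
      · -- α=1, β=0, ε=1 : f + 1 ∈ spn U
        exfalso
        refine hf1 ?_
        have e : f + oneEq n = v + c'' + d'' + z := by
          linear_combination -master - hgf - add_self c'' - add_self d'' - add_self z
        rw [e]; exact add_mem (add_mem (add_mem hvU hcU) hdU) hzU
      · -- α=1, β=1, ε=0 : 1 ∈ spn U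
        exfalso
        refine hone ?_
        have e : oneEq n = v + c'' + d'' + z + z' := by
          linear_combination -master - hgf - hhf - add_self c'' - add_self d''
            - add_self z - add_self z' - add_self f
        rw [e]; exact add_mem (add_mem (add_mem (add_mem hvU hcU) hdU) hzU) hz'U
      · -- α=1, β=1, ε=1 : v = c'' + d'' + (g + h + 1)
        have e : v = c'' + d'' + (g + h + oneEq n) := by
          linear_combination master + add_self (oneEq n)
        rw [e]; exact add_mem (add_mem memc memd) memgh
  refine ⟨?_, key⟩
  rw [linneg_insert, linneg_union, ← key]
  exact sup_comm _ _


end XorSAT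
end

section
/- Let U be a consistent set of affine equations and let f₁,…,f_m be affine equations with V = span(f₁,…,f_m) and V ⊄ span(U). Suppose there exists an equation f with V ⊆ span(U, f+𝟏), f ∉ span(U), and f+𝟏 ∉ span(U). Then there exists an index k such that V ⊆ span(U, f_k), f_k ∉ span(U), and f_k+𝟏 ∉ span(U); that is, if unit propagation on the clause (f₁+𝟏) ∨ … ∨ (f_m+𝟏) permits deducing some equation, then it permits deducing some f_k+𝟏 appearing (negated) in the clause. -/
namespace XorSAT

/-- If unit propagation from a consistent `U` on the clause
`(f₁+𝟏) ∨ … ∨ (f_m+𝟏)` (whose linear negation is `V = span(f₁,…,f_m)`)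
permits deducing some equation, then it permits deducing some `f_k + 𝟏`
appearing (negated) in the clause. -/
theorem stmt5 {n : ℕ} (U : Set (Eqn n)) (hU : Consistent U)
    (m : ℕ) (fs : Fin m → Eqn n)
    (hV : ¬ Submodule.span (ZMod 2) (Set.range fs) ≤ spn U)
    (f : Eqn n)
    (hf : Submodule.span (ZMod 2) (Set.range fs) ≤ spn (insert (f + oneEq n) U))
    (hf1 : f ∉ spn U) (hf2 : f + oneEq n ∉ spn U) :
    ∃ k : Fin m,
      Submodule.span (ZMod 2) (Set.range fs) ≤ spn (insert (fs k) U) ∧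
      fs k ∉ spn U ∧ fs k + oneEq n ∉ spn U := by
  classical
  set g := f + oneEq n with hg
  have self_add : ∀ v : Eqn n, v + v = 0 := by
    intro v
    have h2 : ∀ a : ZMod 2, a + a = 0 := by decide
    refine Prod.ext ?_ ?_
    · funext i; exact h2 _
    · exact h2 _
  -- find k with fs k ∉ spn U
  have hk : ∃ k, fs k ∉ spn U := by
    by_contra h
    push_neg at h
    exact hV (Submodule.span_le.mpr (by rintro _ ⟨k, rfl⟩; exact h k))
  obtain ⟨k, hkW⟩ := hk
  have hmem : fs k ∈ spn (insert g U) := hf (Submodule.subset_span ⟨k, rfl⟩)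
  rw [spn, Submodule.span_insert] at hmem
  rcases Submodule.mem_sup.mp hmem with ⟨a, ha, w, hw, hsum⟩
  rcases Submodule.mem_span_singleton.mp ha with ⟨c, rfl⟩
  have hw' : w ∈ spn U := hw
  have hc : c = 0 ∨ c = 1 := by
    have : ∀ d : ZMod 2, d = 0 ∨ d = 1 := by decide
    exact this c
  rcases hc with rfl | rfl
  · rw [zero_smul, zero_add] at hsum
    exact absurd (hsum ▸ hw') hkW
  · rw [one_smul] at hsum
    -- hsum : g + w = fs k
    have hgw : g = fs k + w := by
      have := congrArg (· + w) hsum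
      simp only [add_assoc, self_add, add_zero] at this
      exact this
    refine ⟨k, ?_, hkW, ?_⟩
    · refine le_trans hf ?_
      rw [spn, spn, Submodule.span_le]
      intro y hy
      rcases hy with rfl | hyU
      · rw [hgw]
        exact Submodule.add_mem _ (Submodule.subset_span (Set.mem_insert _ _))
          (Submodule.span_mono (Set.subset_insert _ _) hw')
      · exact Submodule.subset_span (Set.mem_insert_of_mem _ hyU)
    · intro h3
      apply hf1
      have hfeq : f = (fs k + oneEq n) + w := by
        have : f = g + oneEq n := by
          rw [hg, add_assoc, self_add, add_zero]
        rw [this, hgw]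
        ring
      rw [hfeq]
      exact Submodule.add_mem _ h3 hw'

end XorSAT
end

section
/- Let U be a consistent set of affine equations and let V be a subspace of equations with V ⊄ span(U). If f and g are two equations each deducible by unit propagation, i.e., V ⊆ span(U, f+𝟏), f ∉ span(U), f+𝟏 ∉ span(U), and likewise V ⊆ span(U, g+𝟏), g ∉ span(U), g+𝟏 ∉ span(U), then span(U ∪ {f}) = span(U ∪ {g}). -/
namespace XorSAT

/-- Canonical determinism of unit propagation: if both `f` and `g`
are deducible by unit propagation on a clause with linear negation `V ⊄ span U`,
then `span(U ∪ {f}) = span(U ∪ {g})`. -/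
theorem stmt6 {n : ℕ} (U : Set (Eqn n)) (hU : Consistent U)
    (V : Submodule (ZMod 2) (Eqn n)) (hV : ¬ V ≤ spn U)
    (f g : Eqn n)
    (hfV : V ≤ spn (insert (f + oneEq n) U))
    (hf : f ∉ spn U) (hf1 : f + oneEq n ∉ spn U)
    (hgV : V ≤ spn (insert (g + oneEq n) U))
    (hg : g ∉ spn U) (hg1 : g + oneEq n ∉ spn U) :
    spn (insert f U) = spn (insert g U) := by
  -- pick a witness v ∈ V \ spn U
  obtain ⟨v, hvV, hvU⟩ : ∃ v ∈ V, v ∉ spn U := by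
    by_contra h
    push_neg at h
    exact hV h
  -- decompose v in span (insert (f+1) U)
  have hvf := hfV hvV
  rw [spn, Submodule.mem_span_insert] at hvf
  obtain ⟨a, z₁, hz₁, hv₁⟩ := hvf
  have hvg := hgV hvV
  rw [spn, Submodule.mem_span_insert] at hvg
  obtain ⟨b, z₂, hz₂, hv₂⟩ := hvg
  have ha : a = 1 := by
    rcases (by decide : ∀ c : ZMod 2, c = 0 ∨ c = 1) a with h0 | h1
    · exfalso; apply hvU; rw [spn]; subst h0; simp only [zero_smul, zero_add] at hv₁; exact hv₁ ▸ hz₁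
    · exact h1
  have hb : b = 1 := by
    rcases (by decide : ∀ c : ZMod 2, c = 0 ∨ c = 1) b with h0 | h1
    · exfalso; apply hvU; rw [spn]; subst h0; simp only [zero_smul, zero_add] at hv₂; exact hv₂ ▸ hz₂
    · exact h1
  subst ha hb
  rw [one_smul] at hv₁ hv₂
  have hfg : f - g = z₂ - z₁ := by
    have : f + oneEq n + z₁ = g + oneEq n + z₂ := hv₁ ▸ hv₂
    linear_combination this
  have hdiff : f - g ∈ spn U := by
    rw [hfg]; exact Submodule.sub_mem _ hz₂ hz₁
  apply le_antisymm
  · rw [spn, Submodule.span_le]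
    intro e he
    rcases he with rfl | heU
    · have : e = g + (e - g) := by ring
      rw [this]
      exact Submodule.add_mem _ (Submodule.subset_span (Set.mem_insert _ _))
        (Submodule.span_mono (Set.subset_insert _ _) hdiff)
    · exact Submodule.subset_span (Set.mem_insert_of_mem _ heU)
  · rw [spn, Submodule.span_le]
    intro e he
    rcases he with rfl | heU
    · have : e = f - (f - e) := by ring
      rw [this]
      exact Submodule.sub_mem _ (Submodule.subset_span (Set.mem_insert _ _))
        (Submodule.span_mono (Set.subset_insert _ _) hdiff)
    · exact Submodule.subset_span (Set.mem_insert_of_mem _ heU)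

end XorSAT
end

section
/- Let U be a consistent set of affine equations, C a non-tautological linear clause, and f an affine equation. Unit propagation on C from U can deduce f (i.e., ⟨C⟩ ⊆ span(U, f+𝟏), f ∉ span(U), f+𝟏 ∉ span(U), and ⟨C⟩ ⊄ span(U)) if and only if: every assignment satisfying C and all of U satisfies f, some assignment satisfies C and all of U, and neither f nor f+𝟏 lies in span(U). -/
/-!
Over `F₂`, a linear functional `ψ` on `F₂^{n+1}` with `ψ 𝟏 = 1` is evaluation at the assignment
`xᵢ = ψ(eᵢ)`, and `x` satisfies an equation iff the evaluation vanishes on it. Hence a set `S` is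
consistent iff `𝟏 ∉ span S`, and for consistent `S` the span is exactly the set of equations
entailed by `S` (separate `g ∉ span S` by making `S ∪ {g + 𝟏}` consistent). Both sides of the
theorem are then the same semantic conditions: `⟨C⟩ ⊆ span S` says that no model of `S`
satisfies `C`, applied to `S = U` and to `S = U ∪ {f + 𝟏}`, the latter consistent as `f ∉ span U`.
-/

namespace XorSAT

lemma _root_.ZMod.two_eq_zero_or_eq_one (a : ZMod 2) : a = 0 ∨ a = 1 := by
  decide +revert

variable {n : ℕ}

def eval (x : Fin n → ZMod 2) : Eqn n →ₗ[ZMod 2] ZMod 2 :=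
  Fintype.linearCombination (ZMod 2) x ∘ₗ LinearMap.fst _ _ _ + LinearMap.snd _ _ _

@[simp]
lemma eval_apply (x : Fin n → ZMod 2) (e : Eqn n) : eval x e = ∑ i, e.1 i * x i + e.2 := by
  simp [eval, Fintype.linearCombination_apply]

lemma sats_iff_eval_eq_zero {x : Fin n → ZMod 2} {e : Eqn n} : Sats x e ↔ eval x e = 0 := by
  rw [eval_apply, CharTwo.add_eq_zero, Sats]

lemma sats_add_oneEq_iff {x : Fin n → ZMod 2} {e : Eqn n} : Sats x (e + oneEq n) ↔ ¬ Sats x e := by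
  simp only [Sats, oneEq, Prod.fst_add, Prod.snd_add, add_zero]
  generalize ∑ i, e.1 i * x i = s, e.2 = b
  decide +revert

lemma forall_sats_iff_spn_le_ker {x : Fin n → ZMod 2} {S : Set (Eqn n)} :
    (∀ e ∈ S, Sats x e) ↔ spn S ≤ LinearMap.ker (eval x) := by
  simp [spn, Submodule.span_le, Set.subset_def, sats_iff_eval_eq_zero]

lemma sats_of_mem_spn {x : Fin n → ZMod 2} {S : Set (Eqn n)} (hx : ∀ e ∈ S, Sats x e)
    {g : Eqn n} (hg : g ∈ spn S) : Sats x g :=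
  sats_iff_eval_eq_zero.2 (forall_sats_iff_spn_le_ker.1 hx hg)

lemma eq_eval_of_apply_oneEq {ψ : Eqn n →ₗ[ZMod 2] ZMod 2} (h : ψ (oneEq n) = 1) :
    ψ = eval fun i => ψ (Pi.single i 1, 0) := by
  ext i
  · simp [Pi.single_apply]
  · simpa [oneEq] using h

lemma consistent_iff_oneEq_notMem_spn {S : Set (Eqn n)} : Consistent S ↔ oneEq n ∉ spn S := by
  constructor
  · rintro ⟨x, hx⟩ h
    simpa [Sats, oneEq] using sats_of_mem_spn hx h
  · intro h
    obtain ⟨ψ, hψ, hψS⟩ := Submodule.exists_dual_map_eq_bot_of_notMem h inferInstance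
    have hψ1 : ψ (oneEq n) = 1 := (ZMod.two_eq_zero_or_eq_one _).resolve_left hψ
    refine ⟨fun i => ψ (Pi.single i 1, 0), forall_sats_iff_spn_le_ker.2 ?_⟩
    rw [← eq_eval_of_apply_oneEq hψ1, LinearMap.le_ker_iff_map, hψS]

lemma Consistent.insert_add_oneEq {S : Set (Eqn n)} (hS : Consistent S) {g : Eqn n}
    (hg : g ∉ spn S) : Consistent (insert (g + oneEq n) S) := by
  rw [consistent_iff_oneEq_notMem_spn] at hS ⊢
  rw [spn, Submodule.mem_span_insert]
  rintro ⟨a, z, hz, h⟩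
  obtain rfl | rfl := ZMod.two_eq_zero_or_eq_one a
  · rw [zero_smul, zero_add] at h
    exact hS (h ▸ hz)
  · have : g = -z := by linear_combination (norm := module) -h
    exact hg (this ▸ neg_mem hz)

lemma mem_spn_iff_forall_sats {S : Set (Eqn n)} (hS : Consistent S) {g : Eqn n} :
    g ∈ spn S ↔ ∀ x, (∀ e ∈ S, Sats x e) → Sats x g := by
  refine ⟨fun hg x hx => sats_of_mem_spn hx hg, fun h => by_contra fun hg => ?_⟩
  obtain ⟨x, hx⟩ := hS.insert_add_oneEq hg
  rw [Set.forall_mem_insert, sats_add_oneEq_iff] at hx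
  exact hx.1 (h x hx.2)

lemma linneg_le_spn_iff {S : Set (Eqn n)} (hS : Consistent S) {C : Clause n} :
    linneg C ≤ spn S ↔ ∀ x, (∀ e ∈ S, Sats x e) → ¬ SatsClause x C := by
  simp only [linneg, Submodule.span_le, Set.subset_def, Set.forall_mem_image, SetLike.mem_coe,
    mem_spn_iff_forall_sats hS, sats_add_oneEq_iff, SatsClause]
  grind

theorem stmt8_general {n : ℕ} (U : Set (Eqn n)) (hU : Consistent U)
    (C : Clause n) (f : Eqn n) :
    (linneg C ≤ spn (insert (f + oneEq n) U) ∧ f ∉ spn U ∧ f + oneEq n ∉ spn U ∧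
        ¬ linneg C ≤ spn U) ↔
      ((∀ x : Fin n → ZMod 2, SatsClause x C → (∀ e ∈ U, Sats x e) → Sats x f) ∧
        (∃ x : Fin n → ZMod 2, SatsClause x C ∧ ∀ e ∈ U, Sats x e) ∧
        f ∉ spn U ∧ f + oneEq n ∉ spn U) := by
  by_cases hf : f ∈ spn U
  · simp [hf]
  rw [linneg_le_spn_iff (hU.insert_add_oneEq hf), linneg_le_spn_iff hU]
  simp only [Set.forall_mem_insert, sats_add_oneEq_iff, hf, not_false_eq_true, true_and]
  grind

/-- Semantic characterization of unit propagation: for consistent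
`U`, non-tautological `C` and an equation `f`, unit propagation on `C` from `U`
can deduce `f` iff `C ∧ U ⇒ f`, `C ∧ U` is satisfiable, and `f, f+𝟏 ∉ span U`. -/
theorem stmt8 {n : ℕ} (U : Set (Eqn n)) (hU : Consistent U)
    (C : Clause n) (hC : NonTaut C) (f : Eqn n) :
    (linneg C ≤ spn (insert (f + oneEq n) U) ∧ f ∉ spn U ∧ f + oneEq n ∉ spn U ∧
        ¬ linneg C ≤ spn U) ↔
      ((∀ x : Fin n → ZMod 2, SatsClause x C → (∀ e ∈ U, Sats x e) → Sats x f) ∧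
        (∃ x : Fin n → ZMod 2, SatsClause x C ∧ ∀ e ∈ U, Sats x e) ∧
        f ∉ spn U ∧ f + oneEq n ∉ spn U) :=
  stmt8_general U hU C f

end XorSAT
end

section
/- Let Δ be a set of linear clauses and U a set of affine equations. Let U∗ and U∗′ be two possible final unit sets obtained by repeatedly applying unit propagation on clauses of Δ starting from U (each run continuing until 𝟏 is deduced or no clause of Δ permits any further propagation). Then either 𝟏 ∈ span(U∗) and 𝟏 ∈ span(U∗′), or span(U∗) = span(U∗′). -/
/-!
If a completed run ends in units `V` with `𝟏 ∉ span V`, then `V` is consistent and stuck, and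
any run starting inside `span V` stays there: an equation `f` deduced from a clause `C ∈ Δ`
must lie in `span V`, since otherwise either `⟨C⟩ ⊆ span(V, f + 𝟏) = span V` (when
`f + 𝟏 ∈ span V`) or `C` would deduce `f` from `V`. Comparing two completed runs from `U` in
both directions gives equal spans, unless both contain `𝟏` in their span.
-/

namespace XorSAT

/-- Unit propagation on clause `C` from units `U` may deduce the equation `f`. -/
def CanDeduce {n : ℕ} (U : Set (Eqn n)) (C : Clause n) (f : Eqn n) : Prop :=
  ¬ linneg C ≤ spn U ∧ linneg C ≤ spn (insert (f + oneEq n) U) ∧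
    f ∉ spn U ∧ f + oneEq n ∉ spn U

/-- One step of unit propagation on the clause set `Δ`: a clause `C ∈ Δ` either
deduces the contradiction `𝟏` (if `⟨C⟩ ⊆ span U`) or deduces some equation `f`. -/
def UPStep {n : ℕ} (Δ : Set (Clause n)) (U U' : Set (Eqn n)) : Prop :=
  Consistent U ∧ ∃ C ∈ Δ,
    (linneg C ≤ spn U ∧ U' = insert (oneEq n) U) ∨
    (∃ f, CanDeduce U C f ∧ U' = insert f U)

/-- A (finite) run of unit propagation on the clause set `Δ`. -/
def UPRun {n : ℕ} (Δ : Set (Clause n)) : Set (Eqn n) → Set (Eqn n) → Prop :=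
  Relation.ReflTransGen (UPStep Δ)

/-- The units `V` are conflict-like w.r.t. `Δ`: some run of unit propagation
starting from `V` and using clauses of `Δ` deduces `𝟏`. -/
def ConflictLike {n : ℕ} (Δ : Set (Clause n)) (V : Set (Eqn n)) : Prop :=
  ∃ W, UPRun Δ V W ∧ oneEq n ∈ W

/-- The decomposition `(V', f)` is absorbed by `Δ`: unit propagation from units `V'`
with clauses `Δ` either derives `𝟏` or derives a unit set whose span contains `f + 𝟏`. -/
def Absorbed {n : ℕ} (Δ : Set (Clause n)) (V' : Set (Eqn n)) (f : Eqn n) : Prop :=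
  ∃ W, UPRun Δ V' W ∧ (oneEq n ∈ W ∨ f + oneEq n ∈ spn W)

/-- Unit propagation on the clause `C` from units `U` results in some
propagation (deducing `𝟏` or deducing some equation). -/
def CanPropagate {n : ℕ} (U : Set (Eqn n)) (C : Clause n) : Prop :=
  linneg C ≤ spn U ∨ ∃ f, CanDeduce U C f

/-- No clause of `Δ` causes any propagation from `U`. -/
def UPStuck {n : ℕ} (Δ : Set (Clause n)) (U : Set (Eqn n)) : Prop :=
  ∀ U', ¬ UPStep Δ U U'

/-- A completed run of unit propagation on `Δ` starting from `U`: it proceeds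
until `𝟏` is deduced or no clause of `Δ` permits any further propagation. -/
def UPFinal {n : ℕ} (Δ : Set (Clause n)) (U V : Set (Eqn n)) : Prop :=
  UPRun Δ U V ∧ (oneEq n ∈ V ∨ UPStuck Δ V)

section Propagation

variable {n : ℕ}

lemma eqn_eq_sum_add_smul_oneEq (e : Eqn n) :
    e = ∑ i, e.1 i • ((Pi.single i 1 : Fin n → ZMod 2), (0 : ZMod 2)) + e.2 • oneEq n := by
  ext j
  · simp [Prod.fst_sum, Finset.sum_apply, Pi.single_apply, oneEq]
  · simp [Prod.snd_sum, oneEq]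

lemma sats_iff_apply_eq_zero (ψ : Module.Dual (ZMod 2) (Eqn n)) (hψ : ψ (oneEq n) = 1)
    (e : Eqn n) : Sats (fun i => ψ (Pi.single i 1, 0)) e ↔ ψ e = 0 := by
  conv_rhs => rw [eqn_eq_sum_add_smul_oneEq e]
  simp only [map_add, map_sum, map_smul, smul_eq_mul, hψ, mul_one, CharTwo.add_eq_zero, Sats]

lemma consistent_of_oneEq_notMem_spn {U : Set (Eqn n)} (h : oneEq n ∉ spn U) :
    Consistent U := by
  obtain ⟨ψ, hψ1, hψU⟩ := Submodule.exists_dual_map_eq_bot_of_notMem h inferInstance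
  have hψ : ψ (oneEq n) = 1 := by
    generalize ψ (oneEq n) = a at hψ1; revert a; decide
  refine ⟨_, fun e he => (sats_iff_apply_eq_zero ψ hψ e).2 ?_⟩
  exact LinearMap.le_ker_iff_map.2 hψU (Submodule.subset_span he)

lemma spn_insert_le_iff {g : Eqn n} {W : Set (Eqn n)} {S : Submodule (ZMod 2) (Eqn n)} :
    spn (insert g W) ≤ S ↔ g ∈ S ∧ spn W ≤ S := by
  simp only [spn, Submodule.span_insert, sup_le_iff, Submodule.span_singleton_le_iff_mem]

variable {Δ : Set (Clause n)} {V : Set (Eqn n)}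

lemma UPStuck.not_linneg_le (hstuck : UPStuck Δ V) (hcons : Consistent V)
    {C : Clause n} (hC : C ∈ Δ) : ¬ linneg C ≤ spn V :=
  fun hle => hstuck _ ⟨hcons, C, hC, Or.inl ⟨hle, rfl⟩⟩

lemma UPStuck.not_canDeduce (hstuck : UPStuck Δ V) (hcons : Consistent V)
    {C : Clause n} (hC : C ∈ Δ) (f : Eqn n) : ¬ CanDeduce V C f :=
  fun hf => hstuck _ ⟨hcons, C, hC, Or.inr ⟨f, hf, rfl⟩⟩

lemma UPStep.spn_le_of_stuck (hstuck : UPStuck Δ V) (hone : oneEq n ∉ spn V)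
    {U U' : Set (Eqn n)} (hstep : UPStep Δ U U') (hUV : spn U ≤ spn V) : spn U' ≤ spn V := by
  have hcons := consistent_of_oneEq_notMem_spn hone
  obtain ⟨-, C, hC, ⟨hle, rfl⟩ | ⟨f, ⟨-, hCf, -, -⟩, rfl⟩⟩ := hstep
  · exact absurd (hle.trans hUV) (hstuck.not_linneg_le hcons hC)
  have hCf' : linneg C ≤ spn (insert (f + oneEq n) V) :=
    hCf.trans (spn_insert_le_iff.2 ⟨Submodule.subset_span (Set.mem_insert _ _),
      hUV.trans (Submodule.span_mono (Set.subset_insert _ _))⟩)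
  refine spn_insert_le_iff.2 ⟨?_, hUV⟩
  by_contra hf
  by_cases hf1 : f + oneEq n ∈ spn V
  · exact hstuck.not_linneg_le hcons hC (hCf'.trans (spn_insert_le_iff.2 ⟨hf1, le_rfl⟩))
  · exact hstuck.not_canDeduce hcons hC f ⟨hstuck.not_linneg_le hcons hC, hCf', hf, hf1⟩

lemma UPRun.spn_le_of_stuck (hstuck : UPStuck Δ V) (hone : oneEq n ∉ spn V)
    {U U' : Set (Eqn n)} (hrun : UPRun Δ U U') (hUV : spn U ≤ spn V) : spn U' ≤ spn V := by
  induction hrun with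
  | refl => exact hUV
  | tail _ hstep ih => exact hstep.spn_le_of_stuck hstuck hone ih

lemma UPRun.subset {U U' : Set (Eqn n)} (hrun : UPRun Δ U U') : U ⊆ U' := by
  induction hrun with
  | refl => exact subset_rfl
  | tail _ hstep ih =>
    obtain ⟨-, C, -, ⟨-, rfl⟩ | ⟨f, -, rfl⟩⟩ := hstep <;> exact ih.trans (Set.subset_insert _ _)

lemma UPFinal.spn_le_of_run {U U₁ U₂ : Set (Eqn n)} (hrun : UPRun Δ U U₁)
    (h2 : UPFinal Δ U U₂) (hone : oneEq n ∉ spn U₂) : spn U₁ ≤ spn U₂ := by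
  obtain ⟨hrun₂, hone₂ | hstuck⟩ := h2
  · exact absurd (Submodule.subset_span hone₂) hone
  · exact hrun.spn_le_of_stuck hstuck hone (Submodule.span_mono hrun₂.subset)

end Propagation

/-- Unit propagation on a clause set has a unique fixed point up
to span: any two completed runs from the same starting units either both contain
`𝟏` in their span, or have equal spans. -/
theorem stmt9 {n : ℕ} (Δ : Set (Clause n)) (U U₁ U₂ : Set (Eqn n))
    (h1 : UPFinal Δ U U₁) (h2 : UPFinal Δ U U₂) :
    (oneEq n ∈ spn U₁ ∧ oneEq n ∈ spn U₂) ∨ spn U₁ = spn U₂ := by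
  by_cases m1 : oneEq n ∈ spn U₁ <;> by_cases m2 : oneEq n ∈ spn U₂
  · exact Or.inl ⟨m1, m2⟩
  · exact absurd (h2.spn_le_of_run h1.1 m2 m1) m2
  · exact absurd (h1.spn_le_of_run h2.1 m1 m2) m1
  · exact Or.inr (le_antisymm (h2.spn_le_of_run h1.1 m2) (h1.spn_le_of_run h2.1 m1))

end XorSAT
end

section
/- Let U be a set of affine equations with W = span(U), and let C be a non-tautological linear clause with V = ⟨C⟩ such that f+𝟏 ∉ W for every f ∈ V (i.e., U does not logically imply C), and such that there exist g, h ∈ V with g ∉ W, h ∉ W, and g+h ∉ W. Then the number of f ∈ V with f ∉ W and f+𝟏 ∉ W is at least (3/4)·|V|; equivalently, a uniformly random equation f sampled from V satisfies f ∉ span(U) and f+𝟏 ∉ span(U) with probability at least 3/4. -/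
/-!
The equations of `⟨C⟩` that are bad for sampling are exactly those in `K = ⟨C⟩ ∩ span U`,
since no `f + 𝟏` with `f ∈ ⟨C⟩` lies in `span U`. The hypothesis on `g` and `h` says that
`0, g, h, g + h` lie in four distinct cosets of `K`, so `(k, a, b) ↦ k + a g + b h` embeds
`K × F₂²` into `⟨C⟩`, i.e. `4 |K| ≤ |⟨C⟩|`.
-/

namespace XorSAT

section CharTwo

variable {M : Type*} [AddCommGroup M] [Module (ZMod 2) M] {K V : Submodule (ZMod 2) M} {g h : M}

lemma eq_zero_of_smul_add_smul_mem (hgK : g ∉ K) (hhK : h ∉ K) (hghK : g + h ∉ K)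
    {a b : ZMod 2} (hab : a • g + b • h ∈ K) : a = 0 ∧ b = 0 := by
  have two_elements : ∀ x : ZMod 2, x = 0 ∨ x = 1 := by decide
  rcases two_elements a with rfl | rfl <;> rcases two_elements b with rfl | rfl <;> simp_all

lemma card_mul_four_le_card (hKV : K ≤ V) (hg : g ∈ V) (hh : h ∈ V)
    (hgK : g ∉ K) (hhK : h ∉ K) (hghK : g + h ∉ K) [Finite V] :
    Nat.card K * 4 ≤ Nat.card V := by
  let F : K × ZMod 2 × ZMod 2 → V := fun p =>
    ⟨p.1 + p.2.1 • g + p.2.2 • h, add_mem (add_mem (hKV p.1.2) (V.smul_mem _ hg)) (V.smul_mem _ hh)⟩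
  have hF : Function.Injective F := by
    rintro ⟨⟨k₁, hk₁⟩, a₁, b₁⟩ ⟨⟨k₂, hk₂⟩, a₂, b₂⟩ heq
    have heq' : k₁ + a₁ • g + b₁ • h = k₂ + a₂ • g + b₂ • h := congrArg Subtype.val heq
    have hmem : (a₁ - a₂) • g + (b₁ - b₂) • h ∈ K := by
      have : (a₁ - a₂) • g + (b₁ - b₂) • h = k₂ - k₁ := by
        rw [sub_smul, sub_smul]
        linear_combination (norm := module) heq'
      exact this ▸ sub_mem hk₂ hk₁
    obtain ⟨ha, hb⟩ := eq_zero_of_smul_add_smul_mem hgK hhK hghK hmem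
    obtain rfl := sub_eq_zero.mp ha
    obtain rfl := sub_eq_zero.mp hb
    obtain rfl : k₁ = k₂ := add_right_cancel (add_right_cancel heq')
    rfl
  simpa [Nat.card_prod] using Nat.card_le_card_of_injective F hF

lemma three_mul_card_le_four_mul_card_diff [Finite M] (hKV : K ≤ V) (hg : g ∈ V) (hh : h ∈ V)
    (hgK : g ∉ K) (hhK : h ∉ K) (hghK : g + h ∉ K) :
    3 * Nat.card V ≤ 4 * Nat.card ↥((V : Set M) \ K) := by
  have hcard := card_mul_four_le_card hKV hg hh hgK hhK hghK
  have hle : Nat.card K ≤ Nat.card V := Nat.card_mono (Set.toFinite _) hKV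
  rw [Nat.card_coe_set_eq, Set.ncard_sdiff hKV, ← Nat.card_coe_set_eq, ← Nat.card_coe_set_eq,
    SetLike.coe_sort_coe, SetLike.coe_sort_coe]
  omega

end CharTwo

theorem stmt18_general {n : ℕ} (U : Set (Eqn n)) (C : Clause n)
    (himp : ∀ f ∈ linneg C, f + oneEq n ∉ spn U)
    (g h : Eqn n) (hg : g ∈ linneg C) (hh : h ∈ linneg C)
    (hgW : g ∉ spn U) (hhW : h ∉ spn U) (hghW : g + h ∉ spn U) :
    3 * Nat.card (linneg C : Set (Eqn n)) ≤
      4 * Nat.card {f : Eqn n | f ∈ linneg C ∧ f ∉ spn U ∧ f + oneEq n ∉ spn U} := by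
  have hgood : {f : Eqn n | f ∈ linneg C ∧ f ∉ spn U ∧ f + oneEq n ∉ spn U} =
      (linneg C : Set (Eqn n)) \ (linneg C ⊓ spn U : Submodule (ZMod 2) (Eqn n)) := by
    ext f
    simp only [Set.mem_ofPred_eq, Set.mem_sdiff, SetLike.mem_coe, Submodule.mem_inf]
    exact ⟨fun ⟨hf, hfW, _⟩ => ⟨hf, fun h => hfW h.2⟩,
      fun ⟨hf, hfK⟩ => ⟨hf, fun hfW => hfK ⟨hf, hfW⟩, himp f hf⟩⟩
  rw [hgood]
  exact three_mul_card_le_four_mul_card_diff inf_le_left hg hh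
    (fun hK => hgW hK.2) (fun hK => hhW hK.2) (fun hK => hghW hK.2)

/-- Rejection sampling of decision equations: if `U` does not
imply the non-tautological clause `C` (no `f ∈ ⟨C⟩` has `f+𝟏 ∈ span U`) and
`⟨C⟩` contains watched equations `g, h` with `g, h, g+h ∉ span U`, then at least
three quarters of the equations `f ∈ ⟨C⟩` satisfy `f ∉ span U` and `f+𝟏 ∉ span U`. -/
theorem stmt18 {n : ℕ} (U : Set (Eqn n)) (C : Clause n) (hC : NonTaut C)
    (himp : ∀ f ∈ linneg C, f + oneEq n ∉ spn U)
    (g h : Eqn n) (hg : g ∈ linneg C) (hh : h ∈ linneg C)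
    (hgW : g ∉ spn U) (hhW : h ∉ spn U) (hghW : g + h ∉ spn U) :
    3 * Nat.card (linneg C : Set (Eqn n)) ≤
      4 * Nat.card {f : Eqn n | f ∈ linneg C ∧ f ∉ spn U ∧ f + oneEq n ∉ spn U} :=
  stmt18_general U C himp g h hg hh hgW hhW hghW

end XorSAT
end
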